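/- Hölder continuity of the phase: Let p > 1, μ₀ > 0, C > 0, δ > 0, x₀ ∈ ℝ. Let T : (x₀−δ, x₀+δ) → ℝ be differentiable with |T'| ≤ δ̄ for some δ̄ < 1, let θ : (x₀−δ, x₀+δ) → ℝ be continuous at x₀, and let u be a function on {(ξ,t) : t < T(ξ)} such that for all X ∈ (x₀−δ, x₀+δ) and t sufficiently close to T(X): |u(X,t) − e^{iθ(X)} κ₀ (1−T'(X)²)^{1/(p−1)} (T(X)−t)^{−2/(p−1)}| ≤ C (T(X)−t)^{μ₀−2/(p−1)}, and sup over |ξ−X|≤(3/4)(T(X)−t) of |u(ξ,t) − e^{iθ(x₀)} κ₀ (1−T'(x₀)²)^{1/(p−1)} (T(x₀)−t+T'(x₀)(ξ−x₀))^{−2/(p−1)}| ≤ C (T(x₀)−t)^{μ₀−2/(p−1)} when X = x₀. Then there exist C' > 0 and δ'' > 0 such that for all x with |x − x₀| < δ'', |θ(x) − θ(x₀)| ≤ C' |x − x₀|^{μ₀}. -/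

import Mathlib

open Real MeasureTheory Set

noncomputable section

/-- κ₀ = (2(p+1)/(p−1)²)^{1/(p−1)} -/
def kappa0 (p : ℝ) : ℝ := (2 * (p + 1) / (p - 1) ^ 2) ^ (1 / (p - 1))

/-- κ(d,y) = κ₀ (1−d²)^{1/(p−1)} (1+dy)^{−2/(p−1)} -/
def kappaD (p d y : ℝ) : ℝ :=
  kappa0 p * (1 - d ^ 2) ^ (1 / (p - 1)) * (1 + d * y) ^ (-(2 / (p - 1)))

/-- ρ(y) = (1−y²)^{2/(p−1)} -/
def rho (p y : ℝ) : ℝ := (1 - y ^ 2) ^ (2 / (p - 1))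

/-- u is a C² solution of ∂²ₜu = ∂²ₓu + |u|^{p−1}u on D (first variable space, second time). -/
def IsWaveSolution (p : ℝ) (D : Set (ℝ × ℝ)) (u : ℝ → ℝ → ℂ) : Prop :=
  ContDiffOn ℝ 2 (fun q : ℝ × ℝ => u q.1 q.2) D ∧
  ∀ q ∈ D,
    deriv (deriv (fun t => u q.1 t)) q.2 =
      deriv (deriv (fun x => u x q.2)) q.1 +
        ((norm (u q.1 q.2) ^ (p - 1) : ℝ) : ℂ) * u q.1 q.2

/-- w is a C² solution of the self-similar equation (★) on D (first variable y, second s). -/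
def IsStarSolution (p : ℝ) (D : Set (ℝ × ℝ)) (w : ℝ → ℝ → ℂ) : Prop :=
  ContDiffOn ℝ 2 (fun q : ℝ × ℝ => w q.1 q.2) D ∧
  ∀ q ∈ D,
    deriv (deriv (fun s => w q.1 s)) q.2 =
      (((rho p q.1)⁻¹ : ℝ) : ℂ) *
          deriv (fun y => ((rho p y * (1 - y ^ 2) : ℝ) : ℂ) * deriv (fun z => w z q.2) y) q.1
        - ((2 * (p + 1) / (p - 1) ^ 2 : ℝ) : ℂ) * w q.1 q.2
        + ((norm (w q.1 q.2) ^ (p - 1) : ℝ) : ℂ) * w q.1 q.2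
        - (((p + 3) / (p - 1) : ℝ) : ℂ) * deriv (fun s => w q.1 s) q.2
        - 2 * (q.1 : ℂ) * deriv (fun y => deriv (fun s => w y s) q.2) q.1

/-- L² norm on the interval (a,b). -/
def L2norm (a b : ℝ) (f : ℝ → ℂ) : ℝ :=
  Real.sqrt (∫ x in Ioo a b, norm (f x) ^ 2)

/-- H¹ norm on the interval (a,b). -/
def H1norm (a b : ℝ) (f : ℝ → ℂ) : ℝ :=
  Real.sqrt (∫ x in Ioo a b, (norm (f x) ^ 2 + norm (deriv f x) ^ 2))

/-- The weighted norm of the energy space H. -/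
def Hnorm (p : ℝ) (q1 q2 : ℝ → ℂ) : ℝ :=
  Real.sqrt (∫ y in Ioo (-1 : ℝ) 1,
    (norm (q1 y) ^ 2 + norm (deriv q1 y) ^ 2 * (1 - y ^ 2) +
      norm (q2 y) ^ 2) * rho p y)

/-- The Lyapunov functional E. -/
def energy (p : ℝ) (w v : ℝ → ℂ) : ℝ :=
  ∫ y in Ioo (-1 : ℝ) 1,
    ((1 / 2) * norm (v y) ^ 2 + (1 / 2) * norm (deriv w y) ^ 2 * (1 - y ^ 2) +
      ((p + 1) / (p - 1) ^ 2) * norm (w y) ^ 2 -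
      (1 / (p + 1)) * norm (w y) ^ (p + 1)) * rho p y

/-- Self-similar variables around (x, T x). -/
def wSelf (p : ℝ) (u : ℝ → ℝ → ℂ) (T : ℝ → ℝ) (x y s : ℝ) : ℂ :=
  ((Real.exp (-s)) ^ (2 / (p - 1)) : ℝ) * u (x + y * Real.exp (-s)) (T x - Real.exp (-s))

/-- x₀ is a non-characteristic point for the blow-up curve T. -/
def NonChar (T : ℝ → ℝ) (x0 : ℝ) : Prop :=
  ∃ δ0 ∈ Ioo (0 : ℝ) 1, ∃ t0 < T x0, ∀ ξ τ : ℝ,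
    (ξ, τ) ≠ (x0, T x0) → t0 ≤ τ → τ ≤ T x0 - δ0 * |ξ - x0| → τ < T ξ

/-- Blow-up setup: u solves the wave equation on D_u = {t < T x} and admits no extension. -/
def BlowupSetup (p : ℝ) (T : ℝ → ℝ) (u : ℝ → ℝ → ℂ) : Prop :=
  LipschitzWith 1 T ∧
  IsWaveSolution p {q : ℝ × ℝ | q.2 < T q.1} u ∧
  ¬ ∃ (T' : ℝ → ℝ) (u' : ℝ → ℝ → ℂ),
      (∀ x, T x ≤ T' x) ∧ T' ≠ T ∧
      IsWaveSolution p {q : ℝ × ℝ | q.2 < T' q.1} u' ∧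
      ∀ q : ℝ × ℝ, q.2 < T q.1 → u' q.1 q.2 = u q.1 q.2

/-- Hypothesis (P): exponential convergence to the profile at every non-characteristic point. -/
def HypP (p : ℝ) (T : ℝ → ℝ) (u : ℝ → ℝ → ℂ) (C0 μ0 : ℝ) (d θ sf : ℝ → ℝ) : Prop :=
  0 < C0 ∧ 0 < μ0 ∧
  ∀ x, NonChar T x →
    d x ∈ Ioo (-1 : ℝ) 1 ∧
    ∀ s ≥ sf x,
      Hnorm p
        (fun y => wSelf p u T x y s -
          Complex.exp (Complex.I * (θ x : ℂ)) * ((kappaD p (d x) y : ℝ) : ℂ))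
        (fun y => deriv (fun z => wSelf p u T x y z) s)
      ≤ C0 * Real.exp (-μ0 * (s - sf x))

/-!
Fix `x` near `x₀`, put `r = |x - x₀|` and `t = T x₀ - 2r`. Then `|x - x₀| ≤ (3/4) (T x₀ - t)`,
so `u x t` is approximated both by the profile of phase `θ x` centred at `x` and by the profile of
phase `θ x₀` centred at `x₀`, with errors `O(r^{μ₀ - 2/(p-1)})` since `T x - t ≍ r` by `|T'| ≤ δ̄`.
The profiles have modulus `≍ r^{-2/(p-1)}`, so comparing imaginary parts gives
`|sin (θ x - θ x₀)| = O(r^{μ₀})`. Continuity of `θ` at `x₀` keeps `θ x - θ x₀` in `[-π/2, π/2]`,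
where `|y| ≤ (π/2) |sin y|`.
-/

theorem abs_mul_sin_sub_le_norm_sub (a b α β : ℝ) :
    |a * Real.sin (α - β)| ≤
      ‖Complex.exp (Complex.I * α) * a - Complex.exp (Complex.I * β) * b‖ := by
  have hrot : Complex.exp (Complex.I * α) * a - Complex.exp (Complex.I * β) * b =
      Complex.exp (Complex.I * β) * (Complex.exp ((α - β : ℝ) * Complex.I) * a - b) := by
    rw [mul_sub, ← mul_assoc, ← Complex.exp_add]
    congr 3
    push_cast
    ring
  have him : (Complex.exp ((α - β : ℝ) * Complex.I) * a - b).im = a * Real.sin (α - β) := by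
    simp only [Complex.sub_im, Complex.mul_im, Complex.exp_ofReal_mul_I_re,
      Complex.exp_ofReal_mul_I_im, Complex.ofReal_re, Complex.ofReal_im]
    ring
  rw [hrot, norm_mul, Complex.norm_exp_I_mul_ofReal, one_mul, ← him]
  exact Complex.abs_im_le_norm _

theorem abs_mul_sin_sub_le_of_norm_sub_le {z : ℂ} {a b α β ε₁ ε₂ : ℝ}
    (h₁ : ‖z - Complex.exp (Complex.I * α) * a‖ ≤ ε₁)
    (h₂ : ‖z - Complex.exp (Complex.I * β) * b‖ ≤ ε₂) :
    |a * Real.sin (α - β)| ≤ ε₁ + ε₂ := by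
  refine (abs_mul_sin_sub_le_norm_sub a b α β).trans ?_
  refine (norm_sub_le_norm_sub_add_norm_sub _ z _).trans ?_
  rw [norm_sub_rev]
  exact add_le_add h₁ h₂

theorem rpow_le_max_mul_rpow {a b r s e : ℝ} (ha : 0 < a) (hr : 0 < r)
    (has : a * r ≤ s) (hsb : s ≤ b * r) :
    s ^ e ≤ max (a ^ e) (b ^ e) * r ^ e := by
  have hs : 0 < s := (mul_pos ha hr).trans_le has
  have hb : 0 ≤ b := nonneg_of_mul_nonneg_left (hs.trans_le hsb).le hr
  rcases le_or_gt 0 e with he | he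
  · calc s ^ e ≤ (b * r) ^ e := rpow_le_rpow hs.le hsb he
      _ = b ^ e * r ^ e := mul_rpow hb hr.le
      _ ≤ _ := by gcongr; exact le_max_right _ _
  · calc s ^ e ≤ (a * r) ^ e := rpow_le_rpow_of_nonpos (by positivity) has he.le
      _ = a ^ e * r ^ e := mul_rpow ha.le hr.le
      _ ≤ _ := by gcongr; exact le_max_left _ _

theorem abs_sub_le_mul_abs_sub_of_abs_deriv_le {f f' : ℝ → ℝ} {c δ L x y : ℝ}
    (hf : ∀ z, |z - c| < δ → HasDerivAt f (f' z) z ∧ |f' z| ≤ L)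
    (hx : |x - c| < δ) (hy : |y - c| < δ) :
    |f x - f y| ≤ L * |x - y| := by
  simp only [← Real.dist_eq, ← Metric.mem_ball] at hf hx hy
  simpa only [Real.norm_eq_abs] using
    (convex_ball c δ).norm_image_sub_le_of_norm_hasDerivWithin_le
      (fun z hz => (hf z hz).1.hasDerivWithinAt) (fun z hz => (hf z hz).2) hy hx

/-- The modulus of the blow-up profile with slope `d`, at time `τ` before blow-up. -/
def profileAmplitude (p d τ : ℝ) : ℝ :=
  kappa0 p * (1 - d ^ 2) ^ (1 / (p - 1)) * τ ^ (-(2 / (p - 1)))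

section profileAmplitude

variable {p : ℝ}

theorem kappa0_pos (hp : 1 < p) : 0 < kappa0 p := by
  have : 0 < p - 1 := by linarith
  unfold kappa0
  positivity

theorem profileAmplitude_pos {d τ : ℝ} (hp : 1 < p) (hd : |d| < 1) (hτ : 0 < τ) :
    0 < profileAmplitude p d τ := by
  have : 0 < 1 - d ^ 2 := by nlinarith [sq_abs d, abs_nonneg d]
  have := kappa0_pos hp
  unfold profileAmplitude
  positivity

theorem profileAmplitude_mul {d b r : ℝ} (hb : 0 ≤ b) (hr : 0 ≤ r) :
    profileAmplitude p d (b * r) = profileAmplitude p d b * r ^ (-(2 / (p - 1))) := by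
  rw [profileAmplitude, profileAmplitude, mul_rpow hb hr]
  ring

theorem profileAmplitude_anti {L d τ τ' : ℝ} (hp : 1 < p) (hd : |d| ≤ L) (hL : L < 1)
    (hτ : 0 < τ) (hττ' : τ ≤ τ') :
    profileAmplitude p L τ' ≤ profileAmplitude p d τ := by
  have hγ : 0 ≤ 2 / (p - 1) := div_nonneg zero_le_two (by linarith)
  have hL0 : 0 ≤ L := (abs_nonneg d).trans hd
  have hdL : d ^ 2 ≤ L ^ 2 := by rw [← sq_abs]; gcongr
  have hκ := kappa0_pos hp
  unfold profileAmplitude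
  refine mul_le_mul (mul_le_mul_of_nonneg_left ?_ hκ.le)
    (rpow_le_rpow_of_nonpos hτ hττ' (neg_nonpos.mpr hγ))
    (rpow_nonneg (hτ.le.trans hττ') _) (mul_nonneg hκ.le (rpow_nonneg (by nlinarith) _))
  exact rpow_le_rpow (by nlinarith) (by linarith) (by positivity)

end profileAmplitude

theorem abs_le_pi_div_two_mul_abs_sin {x : ℝ} (hx : |x| ≤ π / 2) :
    |x| ≤ π / 2 * |Real.sin x| := by
  have := mul_abs_le_abs_sin hx
  rw [div_mul_eq_mul_div, div_le_iff₀ pi_pos] at this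
  linarith

theorem abs_sin_sub_le_of_two_profiles {p μ C L r τ₁ τ₂ d α β B : ℝ} {z : ℂ}
    (hp : 1 < p) (hC : 0 ≤ C) (hd : |d| ≤ L) (hL : L < 1) (hr : 0 < r)
    (hτ₁ : (2 - L) * r ≤ τ₁ ∧ τ₁ ≤ (2 + L) * r) (hτ₂ : (2 - L) * r ≤ τ₂ ∧ τ₂ ≤ (2 + L) * r)
    (h₁ : ‖z - Complex.exp (Complex.I * α) * (profileAmplitude p d τ₁ : ℂ)‖ ≤
      C * τ₁ ^ (μ - 2 / (p - 1)))
    (h₂ : ‖z - Complex.exp (Complex.I * β) * B‖ ≤ C * τ₂ ^ (μ - 2 / (p - 1))) :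
    |Real.sin (α - β)| ≤
      2 * C * max ((2 - L) ^ (μ - 2 / (p - 1))) ((2 + L) ^ (μ - 2 / (p - 1))) /
        profileAmplitude p L (2 + L) * r ^ μ := by
  set γ := 2 / (p - 1)
  set K := max ((2 - L) ^ (μ - γ)) ((2 + L) ^ (μ - γ))
  set m := profileAmplitude p L (2 + L)
  have hL0 : 0 ≤ L := (abs_nonneg d).trans hd
  have hm : 0 < m := profileAmplitude_pos hp (by rwa [abs_of_nonneg hL0]) (by linarith)
  have hτ₁_pos : 0 < τ₁ := (mul_pos (by linarith) hr).trans_le hτ₁.1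
  have hrγ : 0 < r ^ (-γ) := rpow_pos_of_pos hr _
  have hA : m * r ^ (-γ) ≤ profileAmplitude p d τ₁ := by
    rw [← profileAmplitude_mul (by linarith) hr.le]
    exact profileAmplitude_anti hp hd hL hτ₁_pos hτ₁.2
  have hsin : profileAmplitude p d τ₁ * |Real.sin (α - β)| ≤ 2 * C * K * r ^ (μ - γ) := by
    have hK₁ := rpow_le_max_mul_rpow (e := μ - γ) (by linarith) hr hτ₁.1 hτ₁.2
    have hK₂ := rpow_le_max_mul_rpow (e := μ - γ) (by linarith) hr hτ₂.1 hτ₂.2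
    calc profileAmplitude p d τ₁ * |Real.sin (α - β)|
      _ = |profileAmplitude p d τ₁ * Real.sin (α - β)| := by
          rw [abs_mul, abs_of_pos ((mul_pos hm hrγ).trans_le hA)]
      _ ≤ C * τ₁ ^ (μ - γ) + C * τ₂ ^ (μ - γ) := abs_mul_sin_sub_le_of_norm_sub_le h₁ h₂
      _ ≤ C * (K * r ^ (μ - γ)) + C * (K * r ^ (μ - γ)) := by gcongr
      _ = 2 * C * K * r ^ (μ - γ) := by ring
  rw [div_mul_eq_mul_div, le_div_iff₀ hm]
  refine le_of_mul_le_mul_right ?_ hrγ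
  calc |Real.sin (α - β)| * m * r ^ (-γ) ≤ profileAmplitude p d τ₁ * |Real.sin (α - β)| := by
        nlinarith [abs_nonneg (Real.sin (α - β))]
    _ ≤ 2 * C * K * r ^ (μ - γ) := hsin
    _ = 2 * C * K * r ^ μ * r ^ (-γ) := by rw [sub_eq_add_neg, rpow_add hr]; ring

theorem phase_holder_continuity_general (p μ0 C δ x0 δbar : ℝ) (hp : 1 < p)
    (hC : 0 < C) (hδ : 0 < δ) (hδbar : δbar < 1)
    (T dT θ : ℝ → ℝ) (u : ℝ → ℝ → ℂ)
    (hdiff : ∀ x, |x - x0| < δ → HasDerivAt T (dT x) x ∧ |dT x| ≤ δbar)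
    (hθcont : ContinuousAt θ x0)
    (tstar : ℝ) (htstar : ∀ X, |X - x0| < δ → tstar < T X)
    (h1 : ∀ X, |X - x0| < δ → ∀ t, tstar ≤ t → t < T X →
      norm (u X t - Complex.exp (Complex.I * (θ X : ℂ)) *
          ((kappa0 p * (1 - dT X ^ 2) ^ (1 / (p - 1)) *
            (T X - t) ^ (-(2 / (p - 1))) : ℝ) : ℂ))
        ≤ C * (T X - t) ^ (μ0 - 2 / (p - 1)))
    (h2 : ∀ t, tstar ≤ t → t < T x0 → ∀ ξ, |ξ - x0| ≤ (3 / 4) * (T x0 - t) →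
      norm (u ξ t - Complex.exp (Complex.I * (θ x0 : ℂ)) *
          ((kappa0 p * (1 - dT x0 ^ 2) ^ (1 / (p - 1)) *
            (T x0 - t + dT x0 * (ξ - x0)) ^ (-(2 / (p - 1))) : ℝ) : ℂ))
        ≤ C * (T x0 - t) ^ (μ0 - 2 / (p - 1))) :
    ∃ C' > (0 : ℝ), ∃ δ'' > (0 : ℝ), ∀ x, |x - x0| < δ'' →
      |θ x - θ x0| ≤ C' * |x - x0| ^ μ0 := by
  have hx0 : |x0 - x0| < δ := by simpa using hδ
  have hδbar0 : 0 ≤ δbar := (abs_nonneg _).trans (hdiff x0 hx0).2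
  have htstar0 := htstar x0 hx0
  obtain ⟨ε, hε, hθε⟩ := Metric.continuousAt_iff.mp hθcont (π / 2) (by positivity)
  set c := 2 * C * max ((2 - δbar) ^ (μ0 - 2 / (p - 1))) ((2 + δbar) ^ (μ0 - 2 / (p - 1))) /
    profileAmplitude p δbar (2 + δbar)
  have hc : 0 < c :=
    div_pos (mul_pos (by positivity) (lt_max_of_lt_left (rpow_pos_of_pos (by linarith) _)))
      (profileAmplitude_pos hp (by rwa [abs_of_nonneg hδbar0]) (by linarith))
  refine ⟨π / 2 * c, by positivity, min ε (min δ ((T x0 - tstar) / 2)),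
    lt_min hε (lt_min hδ (by linarith)), fun x hx => ?_⟩
  obtain ⟨hxε, hxδ, hxt⟩ : |x - x0| < ε ∧ |x - x0| < δ ∧ |x - x0| < (T x0 - tstar) / 2 := by
    simpa only [lt_min_iff] using hx
  rcases eq_or_ne x x0 with rfl | hne
  · simp only [sub_self, abs_zero]
    positivity
  set r := |x - x0|
  have hr : 0 < r := abs_pos.mpr (sub_ne_zero.mpr hne)
  have hT := abs_le.mp (abs_sub_le_mul_abs_sub_of_abs_deriv_le hdiff hxδ hx0)
  have h2x := h2 (T x0 - 2 * r) (by linarith) (by linarith) x (by linarith)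
  rw [sub_sub_cancel] at h2x
  have hsin := abs_sin_sub_le_of_two_profiles (τ₁ := T x - (T x0 - 2 * r)) hp hC.le
    (hdiff x hxδ).2 hδbar hr ⟨by linarith, by linarith⟩ ⟨by nlinarith, by nlinarith⟩
    (h1 x hxδ _ (by linarith) (by nlinarith)) h2x
  have hΔ : |θ x - θ x0| ≤ π / 2 := (hθε (by rwa [Real.dist_eq])).le
  calc |θ x - θ x0| ≤ π / 2 * |Real.sin (θ x - θ x0)| := abs_le_pi_div_two_mul_abs_sin hΔ
    _ ≤ π / 2 * (c * r ^ μ0) := by gcongr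
    _ = π / 2 * c * r ^ μ0 := by ring

/-- Hölder continuity of the phase. -/
theorem phase_holder_continuity (p μ0 C δ x0 δbar : ℝ) (hp : 1 < p)
    (hμ0 : 0 < μ0) (hC : 0 < C) (hδ : 0 < δ) (hδbar : δbar < 1)
    (T dT θ : ℝ → ℝ) (u : ℝ → ℝ → ℂ)
    (hdiff : ∀ x, |x - x0| < δ → HasDerivAt T (dT x) x ∧ |dT x| ≤ δbar)
    (hθcont : ContinuousAt θ x0)
    (tstar : ℝ) (htstar : ∀ X, |X - x0| < δ → tstar < T X)
    (h1 : ∀ X, |X - x0| < δ → ∀ t, tstar ≤ t → t < T X →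
      norm (u X t - Complex.exp (Complex.I * (θ X : ℂ)) *
          ((kappa0 p * (1 - dT X ^ 2) ^ (1 / (p - 1)) *
            (T X - t) ^ (-(2 / (p - 1))) : ℝ) : ℂ))
        ≤ C * (T X - t) ^ (μ0 - 2 / (p - 1)))
    (h2 : ∀ t, tstar ≤ t → t < T x0 → ∀ ξ, |ξ - x0| ≤ (3 / 4) * (T x0 - t) →
      norm (u ξ t - Complex.exp (Complex.I * (θ x0 : ℂ)) *
          ((kappa0 p * (1 - dT x0 ^ 2) ^ (1 / (p - 1)) *
            (T x0 - t + dT x0 * (ξ - x0)) ^ (-(2 / (p - 1))) : ℝ) : ℂ))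
        ≤ C * (T x0 - t) ^ (μ0 - 2 / (p - 1))) :
    ∃ C' > (0 : ℝ), ∃ δ'' > (0 : ℝ), ∀ x, |x - x0| < δ'' →
      |θ x - θ x0| ≤ C' * |x - x0| ^ μ0 :=
  phase_holder_continuity_general p μ0 C δ x0 δbar hp hC hδ hδbar T dT θ u hdiff hθcont tstar htstar
    h1 h2
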